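/- arXiv:2004.12610 — 2 statements merged into one kernel-verified Lean document; each statement's English description precedes it below -/
import Mathlib

section
/- Let T = (T_1,…,T_n) be a commuting tuple of contractions on H with T̂_1 = (T_2,…,T_n) and T̂_n = (T_1,…,T_{n−1}) both satisfying Brehmer positivity, and let G ⊆ {1,…,n−1} with 1 ∈ G. Then the two defect-operator identities D²_{T̂_n,G} + T_1 D²_{T̂_1,G} T_1* = D²_{T̂_{1n},G} = D²_{T̂_1,G} + T_n D²_{T̂_n,G} T_n* hold, where D²_{S,G} := ∑_{F⊆G}(−1)^{|F|} S_F S_F*. -/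
open ContinuousLinearMap

/-- For a tuple `S` of operators and a finite index set `F`, the product `S_F` of the
operators `S i`, `i ∈ F` (in increasing index order). -/
noncomputable def subProd {H : Type*} [NormedAddCommGroup H] [InnerProductSpace ℂ H]
    {m : ℕ} (S : Fin m → (H →L[ℂ] H)) (F : Finset (Fin m)) : H →L[ℂ] H :=
  ((F.sort (· ≤ ·)).map S).prod

/-- The Brehmer defect operator `D²_{S,G} = ∑_{F ⊆ G} (−1)^{|F|} S_F S_F*`. -/
noncomputable def brehmerDefect {H : Type*} [NormedAddCommGroup H] [InnerProductSpace ℂ H]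
    [CompleteSpace H] {m : ℕ} (S : Fin m → (H →L[ℂ] H)) (G : Finset (Fin m)) :
    H →L[ℂ] H :=
  ∑ F ∈ G.powerset, (-1 : ℂ) ^ F.card • (subProd S F * adjoint (subProd S F))


section Aux

variable {H : Type*} [NormedAddCommGroup H] [InnerProductSpace ℂ H]

lemma subProd_congr {m : ℕ} {S S' : Fin m → (H →L[ℂ] H)} {F : Finset (Fin m)}
    (h : ∀ i ∈ F, S i = S' i) : subProd S F = subProd S' F := by
  unfold subProd
  congr 1
  exact List.map_congr_left fun i hi => h i ((Finset.mem_sort _).1 hi)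

lemma subProd_insert_zero {m : ℕ} (S : Fin (m + 1) → (H →L[ℂ] H))
    {F : Finset (Fin (m + 1))} (h : (0 : Fin (m + 1)) ∉ F) :
    subProd S (insert 0 F) = S 0 * subProd S F := by
  unfold subProd
  rw [Finset.sort_insert (· ≤ ·) (fun b _ => Fin.zero_le b) h, List.map_cons, List.prod_cons]

variable [CompleteSpace H]

lemma brehmerDefect_update {m : ℕ} (S : Fin (m + 1) → (H →L[ℂ] H)) (X : H →L[ℂ] H)
    (G : Finset (Fin (m + 1))) (hG : (0 : Fin (m + 1)) ∈ G) :
    brehmerDefect (Function.update S 0 X) G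
      = ∑ F ∈ (G.erase 0).powerset, (-1 : ℂ) ^ F.card •
          (subProd S F * ContinuousLinearMap.adjoint (subProd S F)
            - (X * subProd S F) * ContinuousLinearMap.adjoint (X * subProd S F)) := by
  have h0 : (0 : Fin (m + 1)) ∉ G.erase 0 := Finset.notMem_erase _ _
  have hGi : G = insert 0 (G.erase 0) := (Finset.insert_erase hG).symm
  conv_lhs => rw [brehmerDefect, hGi]
  rw [Finset.sum_powerset_insert h0, ← Finset.sum_add_distrib]
  refine Finset.sum_congr rfl fun F hF => ?_
  have hF0 : (0 : Fin (m + 1)) ∉ F := fun h => h0 ((Finset.mem_powerset.1 hF) h)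
  have h1 : subProd (Function.update S 0 X) F = subProd S F :=
    subProd_congr fun i hi => Function.update_of_ne (by rintro rfl; exact hF0 hi) _ _
  have h2 : subProd (Function.update S 0 X) (insert 0 F) = X * subProd S F := by
    rw [subProd_insert_zero _ hF0, Function.update_self, h1]
  rw [h1, h2, Finset.card_insert_of_notMem hF0, pow_succ, smul_sub]
  module

lemma pair_identity {R : Type*} [Ring R] [StarRing R] (A B P : R) :
    (P * star P - (A * P) * star (A * P))
      + A * (P * star P - (B * P) * star (B * P)) * star A
    = P * star P - (A * B * P) * star (A * B * P) := by
  simp only [star_mul]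
  noncomm_ring

lemma defect_identity {m : ℕ} (S : Fin (m + 1) → (H →L[ℂ] H)) (A B : H →L[ℂ] H)
    (G : Finset (Fin (m + 1))) (hG : (0 : Fin (m + 1)) ∈ G) :
    brehmerDefect (Function.update S 0 A) G
      + A * brehmerDefect (Function.update S 0 B) G * ContinuousLinearMap.adjoint A
    = brehmerDefect (Function.update S 0 (A * B)) G := by
  rw [brehmerDefect_update S A G hG, brehmerDefect_update S B G hG,
    brehmerDefect_update S (A * B) G hG, Finset.mul_sum, Finset.sum_mul,
    ← Finset.sum_add_distrib]
  refine Finset.sum_congr rfl fun F _ => ?_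
  rw [mul_smul_comm, smul_mul_assoc, ← smul_add]
  congr 1
  simpa only [ContinuousLinearMap.star_eq_adjoint] using pair_identity A B (subProd S F)

end Aux

/-- For a commuting tuple of contractions `T` (of length `n + 3`) with `T̂_1 = (T_2,…,T_n)`
and `T̂_n = (T_1,…,T_{n−1})` both satisfying Brehmer positivity, and `G ⊆ {1,…,n−1}` with
`1 ∈ G` (0-indexed here), the two defect identities
`D²_{T̂_n,G} + T_1 D²_{T̂_1,G} T_1* = D²_{T̂_{1n},G} = D²_{T̂_1,G} + T_n D²_{T̂_n,G} T_n*`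
hold, where `T̂_{1n}(G) = (T_1T_n, T_{m_2},…)`, `T̂_1(G) = (T_n, T_{m_2},…)` and
`T̂_n(G) = (T_1, T_{m_2},…)` (i.e. within the sums the first slot of `T̂_1` carries `T_n`). -/
theorem merged_tuple_defect_identities {H : Type*} [NormedAddCommGroup H]
    [InnerProductSpace ℂ H] [CompleteSpace H] {n : ℕ} (T : Fin (n + 3) → (H →L[ℂ] H))
    (hcomm : ∀ i j, Commute (T i) (T j)) (hcontr : ∀ i, ‖T i‖ ≤ 1)
    (h1 : ∀ G : Finset (Fin (n + 2)),
      (brehmerDefect (fun i : Fin (n + 2) => T i.succ) G).IsPositive)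
    (hn : ∀ G : Finset (Fin (n + 2)),
      (brehmerDefect (fun i : Fin (n + 2) => T i.castSucc) G).IsPositive)
    (G : Finset (Fin (n + 2))) (hG : (0 : Fin (n + 2)) ∈ G) :
    brehmerDefect (fun i : Fin (n + 2) => T i.castSucc) G
        + T 0 * brehmerDefect
            (Function.update (fun i : Fin (n + 2) => T i.castSucc) 0
              (T (Fin.last (n + 2)))) G * adjoint (T 0)
      = brehmerDefect
          (Function.update (fun i : Fin (n + 2) => T i.castSucc) 0
            (T 0 * T (Fin.last (n + 2)))) G
    ∧ brehmerDefect
          (Function.update (fun i : Fin (n + 2) => T i.castSucc) 0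
            (T 0 * T (Fin.last (n + 2)))) G
      = brehmerDefect
          (Function.update (fun i : Fin (n + 2) => T i.castSucc) 0
            (T (Fin.last (n + 2)))) G
        + T (Fin.last (n + 2)) * brehmerDefect (fun i : Fin (n + 2) => T i.castSucc) G *
            adjoint (T (Fin.last (n + 2))) := by
  set S : Fin (n + 2) → (H →L[ℂ] H) := fun i => T i.castSucc with hS
  have hS0 : Function.update S 0 (T 0) = S := by
    have : S 0 = T 0 := by simp [hS]
    rw [← this, Function.update_eq_self]
  have hAB : T 0 * T (Fin.last (n + 2)) = T (Fin.last (n + 2)) * T 0 :=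
    hcomm 0 (Fin.last (n + 2))
  constructor
  · have := defect_identity S (T 0) (T (Fin.last (n + 2))) G hG
    rwa [hS0] at this
  · have := defect_identity S (T (Fin.last (n + 2))) (T 0) G hG
    rw [hS0, ← hAB] at this
    exact this.symm
end

section
/- Let T = (T_1,…,T_n) be a commuting tuple of contractions on H satisfying Szegő positivity, with defect operator D_T = (∑_{F⊆{1,…,n}}(−1)^{|F|} T_F T_F*)^{1/2}, and define Π : H → H²_{D_T-space}(𝔻ⁿ) by (Π h)(z) = ∑_{k∈ℤ₊ⁿ} z^k ⊗ D_T T^{*k} h. Then Π is a well-defined bounded operator satisfying Π T_i* = M_{z_i}* Π for all i = 1,…,n, and ‖Π h‖² = lim_{k→∞} ∑_{F⊆{1,…,n}} (−1)^{|F|} ‖T_F^{*k} h‖² for all h ∈ H. In particular, if T is pure then Π is an isometry. -/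
/-!
Since `D_T²` is the Brehmer defect, `‖D_T T^{*k} h‖²` is the mixed finite difference
`∑_F (-1)^{|F|} ‖T^{*(k + 1_F)} h‖²` of `v ↦ ‖T^{*v} h‖²`. Summed over the box `[0, m)ⁿ` these
differences telescope to the corner sum `∑_F (-1)^{|F|} ‖T_F^{*m} h‖²`, which is at most `2ⁿ ‖h‖²`.
Hence `k ↦ D_T T^{*k} h` is square summable, `Π` is bounded, and `‖Π h‖²` is the limit of the
corner sums. If `T` is pure, every corner term with `F ≠ ∅` tends to `0`, leaving `‖h‖²`.
-/

open ContinuousLinearMap Filter Topology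

/-- `T^{*k} = T_1^{*k₁} ⋯ T_n^{*kₙ}` for a multi-index `k`. -/
noncomputable def adjPow {H : Type*} [NormedAddCommGroup H] [InnerProductSpace ℂ H]
    [CompleteSpace H] {n : ℕ} (T : Fin n → (H →L[ℂ] H)) (k : Fin n → ℕ) : H →L[ℂ] H :=
  (List.ofFn fun i => (adjoint (T i)) ^ k i).prod

section MixedDifference

variable {ι R : Type*} [DecidableEq ι] [CommRing R]

def mixedDifference (G : Finset ι) (s : ℕ) (g : (ι → ℕ) → R) (k : ι → ℕ) : R :=
  ∑ F ∈ G.powerset, (-1) ^ F.card * g (k + ∑ i ∈ F, Pi.single i s)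

lemma mixedDifference_add (G : Finset ι) (s : ℕ) (g : (ι → ℕ) → R) (k c : ι → ℕ) :
    mixedDifference G s g (k + c) = mixedDifference G s (fun v => g (v + c)) k := by
  simp only [mixedDifference, add_right_comm k c]

lemma mixedDifference_insert {G : Finset ι} {a : ι} (ha : a ∉ G) (s : ℕ) (g : (ι → ℕ) → R)
    (k : ι → ℕ) :
    mixedDifference (insert a G) s g k
      = mixedDifference G s g k - mixedDifference G s g (k + Pi.single a s) := by
  rw [mixedDifference, Finset.sum_powerset_insert ha, sub_eq_add_neg, mixedDifference,
    mixedDifference, ← Finset.sum_neg_distrib]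
  congr 1
  refine Finset.sum_congr rfl fun F hF => ?_
  have haF : a ∉ F := fun h => ha (Finset.mem_powerset.1 hF h)
  rw [Finset.card_insert_of_notMem haF, Finset.sum_insert haF, pow_succ, ← add_assoc]
  ring

variable [Fintype ι]

def multiIndexBox (G : Finset ι) (m : ℕ) : Finset (ι → ℕ) :=
  Fintype.piFinset fun i => if i ∈ G then Finset.range m else {0}

lemma sum_multiIndexBox_insert {M : Type*} [AddCommMonoid M] {G : Finset ι} {a : ι} (ha : a ∉ G)
    (m : ℕ) (f : (ι → ℕ) → M) :
    ∑ k ∈ multiIndexBox (insert a G) m, f k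
      = ∑ j ∈ Finset.range m, ∑ k ∈ multiIndexBox G m, f (k + Pi.single a j) := by
  rw [← Finset.sum_product']
  refine Finset.sum_nbij' (fun k => (k a, Function.update k a 0))
    (fun p => p.2 + Pi.single a p.1) ?_ ?_ ?_ ?_ ?_
  · intro k hk
    simp only [multiIndexBox, Finset.mem_product, Fintype.mem_piFinset] at hk ⊢
    refine ⟨by simpa using hk a, fun i => ?_⟩
    rcases eq_or_ne i a with rfl | hi
    · simp [ha]
    · simpa [hi] using hk i
  · rintro ⟨j, k⟩ hjk
    simp only [multiIndexBox, Finset.mem_product, Fintype.mem_piFinset] at hjk ⊢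
    intro i
    rcases eq_or_ne i a with rfl | hi
    · have := hjk.2 i
      simp_all
    · simpa [hi] using hjk.2 i
  · intro k _
    ext i
    rcases eq_or_ne i a with rfl | hi <;> simp [*]
  · rintro ⟨j, k⟩ hjk
    have hka : k a = 0 := by
      simpa [multiIndexBox, ha] using (Fintype.mem_piFinset.1 (Finset.mem_product.1 hjk).2) a
    ext i
    · simp [hka]
    · rcases eq_or_ne i a with rfl | hi <;> simp [*]
  · intro k _
    congr
    ext i
    rcases eq_or_ne i a with rfl | hi <;> simp [*]

theorem sum_multiIndexBox_mixedDifference (G : Finset ι) (m : ℕ) (g : (ι → ℕ) → R) :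
    ∑ k ∈ multiIndexBox G m, mixedDifference G 1 g k = mixedDifference G m g 0 := by
  induction G using Finset.induction_on generalizing g with
  | empty => simp [multiIndexBox, mixedDifference]; rfl
  | @insert a G ha ih =>
    calc ∑ k ∈ multiIndexBox (insert a G) m, mixedDifference (insert a G) 1 g k
        = ∑ j ∈ Finset.range m, (mixedDifference G m (fun v => g (v + Pi.single a j)) 0
            - mixedDifference G m (fun v => g (v + Pi.single a (j + 1))) 0) := by
          simp only [sum_multiIndexBox_insert ha, mixedDifference_insert ha,
            Finset.sum_sub_distrib, ← ih, mixedDifference_add, add_assoc, ← Pi.single_add]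
      _ = mixedDifference G m g 0 - mixedDifference G m g (Pi.single a m) := by
          rw [Finset.sum_range_sub', ← mixedDifference_add G m g 0 (Pi.single a m)]
          simp
      _ = mixedDifference (insert a G) m g 0 := by
          rw [mixedDifference_insert ha, zero_add]

lemma tendsto_multiIndexBox_univ_atTop {ι : Type*} [Fintype ι] [DecidableEq ι] :
    Tendsto (multiIndexBox (Finset.univ : Finset ι)) atTop atTop := by
  refine tendsto_atTop_finset_of_monotone (fun a b hab => Fintype.piFinset_subset _ _ fun i => ?_)
    fun k => ⟨Finset.univ.sup k + 1, ?_⟩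
  · simpa using Finset.range_subset_range.2 hab
  · simp [multiIndexBox, Finset.le_sup]

end MixedDifference

section Operators

variable {H : Type*} [NormedAddCommGroup H] [InnerProductSpace ℂ H] {n : ℕ}
  {T : Fin n → (H →L[ℂ] H)}

lemma subProd_insert (hcomm : ∀ i j, Commute (T i) (T j)) {F : Finset (Fin n)} {a : Fin n}
    (ha : a ∉ F) : subProd T (insert a F) = T a * subProd T F := by
  have hperm : ((insert a F).sort (· ≤ ·)).Perm (a :: F.sort (· ≤ ·)) := by
    rw [List.perm_ext_iff_of_nodup (Finset.sort_nodup _ _) (by simp [ha, Finset.sort_nodup])]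
    simp
  rw [subProd, subProd, (hperm.map T).prod_eq' ?_]
  · rfl
  · exact List.Pairwise.map _ (fun _ _ h => h) (List.pairwise_of_forall fun i j => hcomm i j)

variable [CompleteSpace H]

lemma Commute.adjoint {A B : H →L[ℂ] H} (h : Commute A B) : Commute (adjoint A) (adjoint B) := by
  simpa only [star_eq_adjoint] using h.star_star

noncomputable def adjPowHom (hcomm : ∀ i j, Commute (T i) (T j)) :
    (Fin n → Multiplicative ℕ) →* (H →L[ℂ] H) :=
  -- The `show` keeps the commutation proof typed as `Pairwise`; otherwise rewriting with the
  -- `noncommPiCoprod` lemmas fails.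
  MonoidHom.noncommPiCoprod (fun i => powersHom _ (adjoint (T i))) <| show Pairwise _ from
    fun i j _ _ _ => (hcomm i j).adjoint.pow_pow _ _

lemma adjPow_eq_adjPowHom (hcomm : ∀ i j, Commute (T i) (T j)) (k : Fin n → ℕ) :
    adjPow T k = adjPowHom hcomm (fun i => .ofAdd (k i)) := by
  rw [adjPowHom, MonoidHom.noncommPiCoprod_apply, Finset.noncommProd]
  simp only [Fin.univ_val_map, Multiset.noncommProd_coe, adjPow, powersHom_apply, toAdd_ofAdd]

lemma adjPow_add (hcomm : ∀ i j, Commute (T i) (T j)) (k l : Fin n → ℕ) :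
    adjPow T (k + l) = adjPow T k * adjPow T l := by
  simp only [adjPow_eq_adjPowHom hcomm, ← map_mul]
  rfl

lemma adjPow_zero (hcomm : ∀ i j, Commute (T i) (T j)) : adjPow T 0 = 1 := by
  rw [adjPow_eq_adjPowHom hcomm, ← map_one (adjPowHom hcomm)]
  rfl

lemma adjPow_single (hcomm : ∀ i j, Commute (T i) (T j)) (i : Fin n) (s : ℕ) :
    adjPow T (Pi.single i s) = adjoint (T i) ^ s := by
  have : (fun j => Multiplicative.ofAdd ((Pi.single i s : Fin n → ℕ) j)) =
      (Pi.mulSingle i (Multiplicative.ofAdd s) : Fin n → Multiplicative ℕ) := by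
    ext j
    rcases eq_or_ne j i with rfl | hj <;> simp [*]
  rw [adjPow_eq_adjPowHom hcomm, this, adjPowHom, MonoidHom.noncommPiCoprod_mulSingle]
  rfl

lemma adjPow_pow (hcomm : ∀ i j, Commute (T i) (T j)) (k : Fin n → ℕ) (m : ℕ) :
    adjPow T k ^ m = adjPow T (m • k) := by
  simp only [adjPow_eq_adjPowHom hcomm, ← map_pow]
  rfl

lemma norm_adjPow_le_one (hcontr : ∀ i, ‖T i‖ ≤ 1) (k : Fin n → ℕ) : ‖adjPow T k‖ ≤ 1 := by
  let contractions : Submonoid (H →L[ℂ] H) :=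
    { carrier := {A | ‖A‖ ≤ 1}
      mul_mem' := fun hA hB => (norm_mul_le _ _).trans (mul_le_one₀ hA (norm_nonneg _) hB)
      one_mem' := norm_id_le }
  refine contractions.list_prod_mem fun A hA => ?_
  obtain ⟨i, rfl⟩ := (List.mem_ofFn' _ _).1 hA
  exact contractions.pow_mem (show ‖adjoint (T i)‖ ≤ 1 by simpa using hcontr i) _

lemma norm_adjPow_apply_le (hcontr : ∀ i, ‖T i‖ ≤ 1) (k : Fin n → ℕ) (h : H) :
    ‖adjPow T k h‖ ≤ ‖h‖ :=
  (le_opNorm _ _).trans (mul_le_of_le_one_left (norm_nonneg _) (norm_adjPow_le_one hcontr k))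

lemma adjoint_subProd (hcomm : ∀ i j, Commute (T i) (T j)) (F : Finset (Fin n)) :
    adjoint (subProd T F) = adjPow T (∑ i ∈ F, Pi.single i 1) := by
  induction F using Finset.induction_on with
  | empty => rw [Finset.sum_empty, adjPow_zero hcomm, subProd, ← star_eq_adjoint]; simp
  | @insert a F ha ih =>
    rw [subProd_insert hcomm ha, ← star_eq_adjoint, star_mul, star_eq_adjoint, star_eq_adjoint,
      ih, Finset.sum_insert ha, add_comm, adjPow_add hcomm, adjPow_single hcomm, pow_one]

lemma adjoint_subProd_pow (hcomm : ∀ i j, Commute (T i) (T j)) (F : Finset (Fin n)) (m : ℕ) :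
    adjoint (subProd T F) ^ m = adjPow T (∑ i ∈ F, Pi.single i m) := by
  rw [adjoint_subProd hcomm, adjPow_pow hcomm, Finset.smul_sum]
  simp only [← Pi.single_smul', smul_eq_mul, mul_one]

end Operators

lemma lp.hasSum_norm_sq {ι : Type*} {E : ι → Type*} [∀ i, NormedAddCommGroup (E i)]
    (f : lp E 2) : HasSum (fun i => ‖f i‖ ^ 2) (‖f‖ ^ 2) := by
  simpa using lp.hasSum_norm (p := 2) (by norm_num) f

theorem exists_lp_two_of_sum_norm_sq_le {ι 𝕜 E F : Type*} [NormedField 𝕜]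
    [NormedAddCommGroup E] [NormedSpace 𝕜 E] [NormedAddCommGroup F] [NormedSpace 𝕜 F]
    (A : ι → E →L[𝕜] F) (C : ℝ) (hA : ∀ x (u : Finset ι), ∑ k ∈ u, ‖A k x‖ ^ 2 ≤ C * ‖x‖ ^ 2) :
    ∃ Θ : E →L[𝕜] lp (fun _ : ι => F) 2, ∀ x k, (Θ x : ι → F) k = A k x := by
  have hsum : ∀ x, Summable fun k => ‖A k x‖ ^ 2 := fun x =>
    summable_of_sum_le (fun _ => by positivity) (hA x)
  have hmem : ∀ x, Memℓp (fun k => A k x) 2 := fun x => memℓp_gen (by simpa using hsum x)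
  let Θ : E →ₗ[𝕜] lp (fun _ : ι => F) 2 :=
    { toFun := fun x => ⟨fun k => A k x, hmem x⟩
      map_add' := fun x y => lp.ext <| funext fun k => map_add (A k) x y
      map_smul' := fun c x => lp.ext <| funext fun k => map_smul (A k) c x }
  refine ⟨Θ.mkContinuous √C fun x => ?_, fun x k => rfl⟩
  have hsq : ‖Θ x‖ ^ 2 ≤ C * ‖x‖ ^ 2 := by
    rw [← (lp.hasSum_norm_sq (Θ x)).tsum_eq]
    exact (hsum x).tsum_le_of_sum_le (hA x)
  rw [← Real.sqrt_sq (norm_nonneg x), ← Real.sqrt_mul' _ (by positivity)]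
  exact Real.le_sqrt_of_sq_le hsq

section Analysis

variable {H : Type*} [NormedAddCommGroup H] [InnerProductSpace ℂ H] [CompleteSpace H]

lemma norm_sq_eq_of_sq_eq_brehmerDefect {m : ℕ} (S : Fin m → (H →L[ℂ] H)) (G : Finset (Fin m))
    {D : H →L[ℂ] H} (hD : IsSelfAdjoint D) (hD2 : D ^ 2 = brehmerDefect S G) (x : H) :
    ‖D x‖ ^ 2 = ∑ F ∈ G.powerset, (-1 : ℝ) ^ F.card * ‖adjoint (subProd S F) x‖ ^ 2 := by
  rw [apply_norm_sq_eq_inner_adjoint_left, hD.adjoint_eq, ← mul_def, ← sq, hD2, brehmerDefect]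
  simp only [sum_apply, smul_apply, sum_inner, inner_smul_left, map_sum]
  refine Finset.sum_congr rfl fun F _ => ?_
  rw [apply_norm_sq_eq_inner_adjoint_left, adjoint_adjoint,
    show (-1 : ℂ) ^ F.card = ((-1 : ℝ) ^ F.card : ℝ) by push_cast; rfl, Complex.conj_ofReal]
  exact Complex.re_ofReal_mul _ _

variable {n : ℕ} {T : Fin n → (H →L[ℂ] H)}

noncomputable def brehmerSum (T : Fin n → (H →L[ℂ] H)) (h : H) (m : ℕ) : ℝ :=
  ∑ F : Finset (Fin n), (-1 : ℝ) ^ F.card * ‖(adjoint (subProd T F) ^ m) h‖ ^ 2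

lemma norm_adjoint_subProd_pow_apply_le (hcomm : ∀ i j, Commute (T i) (T j))
    (hcontr : ∀ i, ‖T i‖ ≤ 1) {F : Finset (Fin n)} {i : Fin n} (hi : i ∈ F) (m : ℕ) (h : H) :
    ‖(adjoint (subProd T F) ^ m) h‖ ≤ ‖(adjoint (T i) ^ m) h‖ := by
  rw [adjoint_subProd_pow hcomm, ← Finset.sum_erase_add _ _ hi, adjPow_add hcomm,
    adjPow_single hcomm, mul_apply_eq_comp]
  exact norm_adjPow_apply_le hcontr _ _

lemma tendsto_brehmerSum_of_pure (hcomm : ∀ i j, Commute (T i) (T j))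
    (hcontr : ∀ i, ‖T i‖ ≤ 1)
    (hpure : ∀ (i : Fin n) (h : H), Tendsto (fun m : ℕ => (adjoint (T i) ^ m) h) atTop (𝓝 0))
    (h : H) : Tendsto (brehmerSum T h) atTop (𝓝 (‖h‖ ^ 2)) := by
  have hterm : ∀ F : Finset (Fin n), Tendsto
      (fun m : ℕ => (-1 : ℝ) ^ F.card * ‖(adjoint (subProd T F) ^ m) h‖ ^ 2) atTop
      (𝓝 (if F = ∅ then ‖h‖ ^ 2 else 0)) := by
    intro F
    obtain rfl | ⟨i, hi⟩ := F.eq_empty_or_nonempty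
    · simp [subProd, ← star_eq_adjoint]
    · have hsq : Tendsto (fun m : ℕ => ‖(adjoint (T i) ^ m) h‖ ^ 2) atTop (𝓝 0) := by
        simpa using ((hpure i h).norm.pow 2)
      have := (squeeze_zero (fun _ => by positivity) (fun m => pow_le_pow_left₀ (norm_nonneg _)
        (norm_adjoint_subProd_pow_apply_le hcomm hcontr hi m h) 2) hsq).const_mul
        ((-1 : ℝ) ^ F.card)
      simpa [Finset.ne_empty_of_mem hi] using this
  unfold brehmerSum
  simpa using tendsto_finsetSum Finset.univ fun F _ => hterm F

variable {DT : H →L[ℂ] H}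

lemma sum_multiIndexBox_norm_sq (hcomm : ∀ i j, Commute (T i) (T j)) (hDT : IsSelfAdjoint DT)
    (hDTsq : DT ^ 2 = brehmerDefect T Finset.univ) (h : H) (m : ℕ) :
    ∑ k ∈ multiIndexBox Finset.univ m, ‖DT (adjPow T k h)‖ ^ 2 = brehmerSum T h m := by
  have hexpand : ∀ k, ‖DT (adjPow T k h)‖ ^ 2
      = mixedDifference Finset.univ 1 (fun v => ‖adjPow T v h‖ ^ 2) k := fun k => by
    rw [norm_sq_eq_of_sq_eq_brehmerDefect T _ hDT hDTsq, mixedDifference]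
    simp only [adjoint_subProd hcomm, ← mul_apply_eq_comp, ← adjPow_add hcomm, add_comm k]
  rw [Finset.sum_congr rfl fun k _ => hexpand k, sum_multiIndexBox_mixedDifference]
  simp only [mixedDifference, brehmerSum, zero_add, Finset.powerset_univ,
    adjoint_subProd_pow hcomm]

lemma sum_norm_sq_apply_adjPow_le (hcomm : ∀ i j, Commute (T i) (T j)) (hcontr : ∀ i, ‖T i‖ ≤ 1)
    (hDT : IsSelfAdjoint DT) (hDTsq : DT ^ 2 = brehmerDefect T Finset.univ) (h : H)
    (u : Finset (Fin n → ℕ)) : ∑ k ∈ u, ‖DT (adjPow T k h)‖ ^ 2 ≤ 2 ^ n * ‖h‖ ^ 2 := by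
  obtain ⟨m, hm⟩ := (tendsto_multiIndexBox_univ_atTop.eventually (eventually_ge_atTop u)).exists
  calc ∑ k ∈ u, ‖DT (adjPow T k h)‖ ^ 2
      ≤ ∑ k ∈ multiIndexBox Finset.univ m, ‖DT (adjPow T k h)‖ ^ 2 :=
        Finset.sum_le_sum_of_subset_of_nonneg hm fun _ _ _ => by positivity
    _ = brehmerSum T h m := sum_multiIndexBox_norm_sq hcomm hDT hDTsq h m
    _ ≤ ∑ _F : Finset (Fin n), ‖h‖ ^ 2 := Finset.sum_le_sum fun F _ => by
        rw [adjoint_subProd_pow hcomm]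
        refine (mul_le_of_le_one_left (by positivity) ?_).trans ?_
        · exact (le_abs_self _).trans (abs_neg_one_pow _).le
        · gcongr
          exact norm_adjPow_apply_le hcontr _ _
    _ = 2 ^ n * ‖h‖ ^ 2 := by simp

end Analysis

/-- `H²_{𝒟_T}(𝔻ⁿ)` is realized through Taylor coefficients as `ℓ²(ℤ₊ⁿ, H)`, so that `M_{z_i}*`
becomes the coefficient shift `k ↦ k + eᵢ`. -/
theorem canonical_dilation_map_general {H : Type*} [NormedAddCommGroup H]
    [InnerProductSpace ℂ H] [CompleteSpace H] {n : ℕ} (T : Fin n → (H →L[ℂ] H))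
    (hcomm : ∀ i j, Commute (T i) (T j)) (hcontr : ∀ i, ‖T i‖ ≤ 1)
    (DT : H →L[ℂ] H) (hDTpos : DT.IsPositive)
    (hDTsq : DT ^ 2 = brehmerDefect T Finset.univ) :
    ∃ Θ : H →L[ℂ] (lp (fun _ : (Fin n → ℕ) => H) 2),
      (∀ (h : H) (k : Fin n → ℕ), (Θ h : ∀ _ : (Fin n → ℕ), H) k = DT (adjPow T k h)) ∧
      (∀ (i : Fin n) (h : H) (k : Fin n → ℕ),
        (Θ (adjoint (T i) h) : ∀ _ : (Fin n → ℕ), H) k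
          = (Θ h : ∀ _ : (Fin n → ℕ), H) (k + Pi.single i 1)) ∧
      (∀ h : H,
        Tendsto (fun m : ℕ => ∑ F : Finset (Fin n),
            (-1 : ℝ) ^ F.card * ‖((adjoint (subProd T F)) ^ m) h‖ ^ 2)
          atTop (𝓝 (‖Θ h‖ ^ 2))) ∧
      ((∀ (i : Fin n) (h : H),
          Tendsto (fun m : ℕ => ((adjoint (T i)) ^ m) h) atTop (𝓝 0)) →
        ∀ h : H, ‖Θ h‖ = ‖h‖) := by
  have hDT := hDTpos.isSelfAdjoint
  obtain ⟨Θ, hΘ⟩ := exists_lp_two_of_sum_norm_sq_le (fun k => DT ∘L adjPow T k) (2 ^ n)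
    (sum_norm_sq_apply_adjPow_le hcomm hcontr hDT hDTsq)
  have hlim : ∀ h : H, Tendsto (brehmerSum T h) atTop (𝓝 (‖Θ h‖ ^ 2)) := by
    intro h
    have := (lp.hasSum_norm_sq (Θ h)).comp tendsto_multiIndexBox_univ_atTop
    simpa [Function.comp_def, hΘ, sum_multiIndexBox_norm_sq hcomm hDT hDTsq] using this
  refine ⟨Θ, hΘ, fun i h k => ?_, hlim, fun hpure h => ?_⟩
  · simp [hΘ, adjPow_add hcomm, adjPow_single hcomm]
  · have := tendsto_nhds_unique (hlim h) (tendsto_brehmerSum_of_pure hcomm hcontr hpure h)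
    exact (sq_eq_sq₀ (norm_nonneg _) (norm_nonneg _)).1 this

/-- The canonical dilation map of a Szegő tuple `T`, realized on the Hardy space
`H²_{𝒟_T}(𝔻ⁿ)` in Taylor-coefficient form, i.e. on `ℓ²(ℤ₊ⁿ, H)`:
`(Θ h) k = D_T T^{*k} h`. It intertwines `T_i*` with `M_{z_i}*` (the coefficient
backward shift), its norm is the Brehmer limit, and it is an isometry if `T` is pure. -/
theorem canonical_dilation_map {H : Type*} [NormedAddCommGroup H]
    [InnerProductSpace ℂ H] [CompleteSpace H] {n : ℕ} (T : Fin n → (H →L[ℂ] H))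
    (hcomm : ∀ i j, Commute (T i) (T j)) (hcontr : ∀ i, ‖T i‖ ≤ 1)
    (hszego : (brehmerDefect T Finset.univ).IsPositive)
    (DT : H →L[ℂ] H) (hDTpos : DT.IsPositive)
    (hDTsq : DT ^ 2 = brehmerDefect T Finset.univ) :
    ∃ Θ : H →L[ℂ] (lp (fun _ : (Fin n → ℕ) => H) 2),
      (∀ (h : H) (k : Fin n → ℕ), (Θ h : ∀ _ : (Fin n → ℕ), H) k = DT (adjPow T k h)) ∧
      (∀ (i : Fin n) (h : H) (k : Fin n → ℕ),
        (Θ (adjoint (T i) h) : ∀ _ : (Fin n → ℕ), H) k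
          = (Θ h : ∀ _ : (Fin n → ℕ), H) (k + Pi.single i 1)) ∧
      (∀ h : H,
        Tendsto (fun m : ℕ => ∑ F : Finset (Fin n),
            (-1 : ℝ) ^ F.card * ‖((adjoint (subProd T F)) ^ m) h‖ ^ 2)
          atTop (𝓝 (‖Θ h‖ ^ 2))) ∧
      ((∀ (i : Fin n) (h : H),
          Tendsto (fun m : ℕ => ((adjoint (T i)) ^ m) h) atTop (𝓝 0)) →
        ∀ h : H, ‖Θ h‖ = ‖h‖) :=
  canonical_dilation_map_general T hcomm hcontr DT hDTpos hDTsq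
end
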